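/- Fix K > 0 and u ∈ [min(1−K, 0), 1], and suppose Ẽ^{u,K} = {z_1, ..., z_r} with r ∈ {1, 2, 3}. For each k define ν_k ∈ P by ν_{k,1} = (u + K z_k² + z_k)/2, ν_{k,−1} = (u + K z_k² − z_k)/2, and ν_{k,0} = 1 − ν_{k,1} − ν_{k,−1}. Then the measures ν_1, ..., ν_r are pairwise distinct and E^{u,K} = {ν_1, ..., ν_r}. -/
import Mathlib


noncomputable section

/-- `μ = (μ₋₁, μ₀, μ₁)` is a probability vector on `Λ = {-1,0,1}`. -/
def IsProbVec (μ : ℝ × ℝ × ℝ) : Prop :=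
  0 ≤ μ.1 ∧ 0 ≤ μ.2.1 ∧ 0 ≤ μ.2.2 ∧ μ.1 + μ.2.1 + μ.2.2 = 1

/-- Relative entropy `R(μ|ρ)` with respect to the uniform measure `ρ = (1/3,1/3,1/3)`
(the convention `0 · log 0 = 0` holds automatically since `Real.log 0 = 0`). -/
def relEntUnif (μ : ℝ × ℝ × ℝ) : ℝ :=
  μ.1 * Real.log (3 * μ.1) + μ.2.1 * Real.log (3 * μ.2.1) + μ.2.2 * Real.log (3 * μ.2.2)

/-- `f_K(μ) = (μ₁ + μ₋₁) − K (μ₁ − μ₋₁)²`. -/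
def fK (K : ℝ) (μ : ℝ × ℝ × ℝ) : ℝ :=
  (μ.2.2 + μ.1) - K * (μ.2.2 - μ.1) ^ 2

/-- The constraint set `D_{u,K} = {μ ∈ P : f_K(μ) = u}`. -/
def Duk (u K : ℝ) : Set (ℝ × ℝ × ℝ) := {μ | IsProbVec μ ∧ fK K μ = u}

/-- The set `E^{u,K}` of microcanonical equilibrium macrostates: the minimizers of
`R(μ|ρ)` over `D_{u,K}`. -/
def microE (u K : ℝ) : Set (ℝ × ℝ × ℝ) :=
  {μ | μ ∈ Duk u K ∧ ∀ ν ∈ Duk u K, relEntUnif μ ≤ relEntUnif ν}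

/-- `M_{u,K} = {μ₁ − μ₋₁ : μ ∈ D_{u,K}}`. -/
def Muk (u K : ℝ) : Set ℝ := {z | ∃ μ ∈ Duk u K, μ.2.2 - μ.1 = z}

/-- With `q = u + Kz²`,
`R_{u,K}(z) = ((q+z)/2)log(q+z) + ((q−z)/2)log(q−z) + (1−q)log(1−q) − q log 2 + log 3`. -/
def Ruk (u K z : ℝ) : ℝ :=
  (u + K * z ^ 2 + z) / 2 * Real.log (u + K * z ^ 2 + z)
    + (u + K * z ^ 2 - z) / 2 * Real.log (u + K * z ^ 2 - z)
    + (1 - (u + K * z ^ 2)) * Real.log (1 - (u + K * z ^ 2))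
    - (u + K * z ^ 2) * Real.log 2 + Real.log 3

/-- `Ẽ^{u,K}`: the set of `z ∈ M_{u,K}` minimizing `R_{u,K}` over `M_{u,K}`. -/
def tildeEmicro (u K : ℝ) : Set ℝ :=
  {z | z ∈ Muk u K ∧ ∀ y ∈ Muk u K, Ruk u K z ≤ Ruk u K y}

lemma log_half_aux (x : ℝ) (hx : 0 ≤ x) :
    x / 2 * Real.log (3 * (x / 2)) = x / 2 * Real.log x + x / 2 * (Real.log 3 - Real.log 2) := by
  rcases eq_or_lt_of_le hx with h | h
  · simp [← h]
  · rw [show (3 : ℝ) * (x / 2) = 3 * x / 2 by ring,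
      Real.log_div (by positivity) (by norm_num),
      Real.log_mul (by norm_num) h.ne']
    ring

lemma log_three_aux (x : ℝ) (hx : 0 ≤ x) :
    x * Real.log (3 * x) = x * Real.log x + x * Real.log 3 := by
  rcases eq_or_lt_of_le hx with h | h
  · simp [← h]
  · rw [Real.log_mul (by norm_num) h.ne']; ring

lemma mem_Duk_rep (u K : ℝ) (μ : ℝ × ℝ × ℝ) (h : μ ∈ Duk u K) :
    μ = (((u + K * (μ.2.2 - μ.1) ^ 2 - (μ.2.2 - μ.1)) / 2 : ℝ),
         (1 - (u + K * (μ.2.2 - μ.1) ^ 2 + (μ.2.2 - μ.1)) / 2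
            - (u + K * (μ.2.2 - μ.1) ^ 2 - (μ.2.2 - μ.1)) / 2 : ℝ),
         ((u + K * (μ.2.2 - μ.1) ^ 2 + (μ.2.2 - μ.1)) / 2 : ℝ)) := by
  obtain ⟨a, b, c⟩ := μ
  obtain ⟨⟨h1, h2, h3, hsum⟩, hf⟩ := h
  simp only [fK] at hf
  simp only [IsProbVec] at *
  have hq : c + a = u + K * (c - a) ^ 2 := by linarith
  refine Prod.ext ?_ (Prod.ext ?_ ?_) <;> simp <;> linarith

lemma relEnt_eq_Ruk (u K : ℝ) (μ : ℝ × ℝ × ℝ) (h : μ ∈ Duk u K) :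
    relEntUnif μ = Ruk u K (μ.2.2 - μ.1) := by
  have hrep := mem_Duk_rep u K μ h
  obtain ⟨⟨h1, h2, h3, hsum⟩, hf⟩ := h
  obtain ⟨a, b, c⟩ := μ
  simp only [Prod.ext_iff] at hrep
  simp only at h1 h2 h3 hsum hrep ⊢
  obtain ⟨ha, hb, hc⟩ := hrep
  obtain ⟨z, hz⟩ : ∃ z : ℝ, c - a = z := ⟨_, rfl⟩
  rw [hz] at ha hb hc ⊢
  have hqz1 : 0 ≤ u + K * z ^ 2 - z := by nlinarith [h1, ha]
  have hqz2 : 0 ≤ u + K * z ^ 2 + z := by nlinarith [h3, hc]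
  have hq1 : 0 ≤ 1 - (u + K * z ^ 2) := by nlinarith [h2, hb]
  simp only [relEntUnif, Ruk]
  rw [ha, hb, hc]
  rw [show (1 : ℝ) - (u + K * z ^ 2 + z) / 2 - (u + K * z ^ 2 - z) / 2
      = 1 - (u + K * z ^ 2) by ring]
  rw [log_half_aux _ hqz1, log_half_aux _ hqz2, log_three_aux _ hq1]
  ring


/-- Fix `K > 0`, `u ∈ [min(1−K,0), 1]`, and suppose
`Ẽ^{u,K} = {z_1, …, z_r}` with `r ∈ {1,2,3}` distinct points.  Define
`ν_k = (ν_{k,-1}, ν_{k,0}, ν_{k,1})` with `ν_{k,±1} = (u + Kz_k² ± z_k)/2` and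
`ν_{k,0} = 1 − ν_{k,1} − ν_{k,-1}`.  Then the `ν_k` are pairwise distinct and
`E^{u,K} = {ν_1, …, ν_r}`. -/
theorem microE_eq_of_tildeEmicro (K u : ℝ) (hK : 0 < K)
    (hu : u ∈ Set.Icc (min (1 - K) 0) 1)
    (r : ℕ) (hr : r = 1 ∨ r = 2 ∨ r = 3) (zs : Fin r → ℝ)
    (hzs : Function.Injective zs) (hE : tildeEmicro u K = Set.range zs) :
    Function.Injective (fun k : Fin r =>
      (((u + K * (zs k) ^ 2 - zs k) / 2 : ℝ),
       (1 - (u + K * (zs k) ^ 2 + zs k) / 2 - (u + K * (zs k) ^ 2 - zs k) / 2 : ℝ),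
       ((u + K * (zs k) ^ 2 + zs k) / 2 : ℝ))) ∧
    microE u K = Set.range (fun k : Fin r =>
      (((u + K * (zs k) ^ 2 - zs k) / 2 : ℝ),
       (1 - (u + K * (zs k) ^ 2 + zs k) / 2 - (u + K * (zs k) ^ 2 - zs k) / 2 : ℝ),
       ((u + K * (zs k) ^ 2 + zs k) / 2 : ℝ))) := by
  set ν : ℝ → ℝ × ℝ × ℝ := fun z =>
    (((u + K * z ^ 2 - z) / 2 : ℝ),
     (1 - (u + K * z ^ 2 + z) / 2 - (u + K * z ^ 2 - z) / 2 : ℝ),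
     ((u + K * z ^ 2 + z) / 2 : ℝ)) with hν
  have hνz : ∀ z : ℝ, (ν z).2.2 - (ν z).1 = z := by intro z; simp [hν]; ring
  have hνinj : Function.Injective ν := by
    intro z₁ z₂ h
    have := congrArg (fun p : ℝ × ℝ × ℝ => p.2.2 - p.1) h
    simpa [hνz] using this
  -- z ∈ Muk → ν z ∈ Duk
  have hMuk : ∀ z ∈ Muk u K, ν z ∈ Duk u K := by
    intro z hz
    obtain ⟨μ, hμ, hμz⟩ := hz
    have := mem_Duk_rep u K μ hμ
    rw [hμz] at this
    have happ : ν z = ((u + K * z ^ 2 - z) / 2,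
        1 - (u + K * z ^ 2 + z) / 2 - (u + K * z ^ 2 - z) / 2,
        (u + K * z ^ 2 + z) / 2) := rfl
    rw [happ, ← this]; exact hμ
  constructor
  · exact fun k₁ k₂ h => hzs (hνinj h)
  · ext μ
    simp only [Set.mem_range]
    constructor
    · rintro ⟨hμD, hmin⟩
      have hzM : μ.2.2 - μ.1 ∈ Muk u K := ⟨μ, hμD, rfl⟩
      have hzE : μ.2.2 - μ.1 ∈ tildeEmicro u K := by
        refine ⟨hzM, fun y hy => ?_⟩
        have h1 := relEnt_eq_Ruk u K μ hμD
        have h2 := relEnt_eq_Ruk u K (ν y) (hMuk y hy)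
        rw [hνz] at h2
        calc Ruk u K (μ.2.2 - μ.1) = relEntUnif μ := h1.symm
          _ ≤ relEntUnif (ν y) := hmin _ (hMuk y hy)
          _ = Ruk u K y := h2
      rw [hE] at hzE
      obtain ⟨k, hk⟩ := hzE
      refine ⟨k, ?_⟩
      have := mem_Duk_rep u K μ hμD
      show ν (zs k) = μ
      rw [hk]
      exact this.symm
    · rintro ⟨k, hk⟩
      have hzE : zs k ∈ tildeEmicro u K := by rw [hE]; exact ⟨k, rfl⟩
      obtain ⟨hzM, hzmin⟩ := hzE
      have hD : ν (zs k) ∈ Duk u K := hMuk _ hzM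
      rw [show μ = ν (zs k) from hk.symm]
      refine ⟨hD, fun μ' hμ' => ?_⟩
      have h1 := relEnt_eq_Ruk u K (ν (zs k)) hD
      have h2 := relEnt_eq_Ruk u K μ' hμ'
      rw [hνz] at h1
      have hyM : μ'.2.2 - μ'.1 ∈ Muk u K := ⟨μ', hμ', rfl⟩
      calc relEntUnif (ν (zs k)) = Ruk u K (zs k) := h1
        _ ≤ Ruk u K (μ'.2.2 - μ'.1) := hzmin _ hyM
        _ = relEntUnif μ' := h2.symm
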